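/- Let (Ω, F, Λ) be such that Ω is a measurable space, Λ a compact metric space, and Y : Ω × Λ → ℝ a map measurable in ω for each θ and continuous in θ for each ω. Let P be a family of probability measures on Ω and P̄ the family of all probability measures on Ω × Λ whose Ω-marginal lies in P. Then Y ≥ 0 P̄-quasi-surely if and only if, for P-quasi-every ω, Y(ω,θ) ≥ 0 for all θ ∈ Λ. -/

import Mathlib

/-!
Continuity in `θ` lets the event `{ω | ∃ θ, Y ω θ < 0}` be computed over a countable dense set
of parameters, so it is measurable and it is null as soon as each `{ω | Y ω θ < 0}` is.
Testing the product condition on `μ ⊗ δ_θ` (the image of `μ` under `ω ↦ (ω, θ)`) gives these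
null sets; conversely, the bad set in `Ω × Λ` lies over the bad set in `Ω`, which is null under
the `Ω`-marginal.
-/

open MeasureTheory Set TopologicalSpace

section ParametrizedNegativity

variable {Ω Λ : Type*} [TopologicalSpace Λ] {Y : Ω → Λ → ℝ}

theorem setOf_exists_neg_eq_biUnion_of_dense (hcont : ∀ ω, Continuous (Y ω)) {s : Set Λ}
    (hs : Dense s) : {ω | ∃ θ, Y ω θ < 0} = ⋃ θ ∈ s, {ω | Y ω θ < 0} := by
  ext ω
  simp only [mem_ofPred_eq, mem_iUnion, exists_prop]
  constructor
  · rintro ⟨θ, hθ⟩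
    exact hs.exists_mem_open (isOpen_lt (hcont ω) continuous_const) ⟨θ, hθ⟩
  · rintro ⟨θ, -, hθ⟩
    exact ⟨θ, hθ⟩

variable [SeparableSpace Λ] [MeasurableSpace Ω]

theorem measurableSet_setOf_exists_neg (hmeas : ∀ θ, Measurable fun ω => Y ω θ)
    (hcont : ∀ ω, Continuous (Y ω)) : MeasurableSet {ω | ∃ θ, Y ω θ < 0} := by
  obtain ⟨s, hs_count, hs_dense⟩ := exists_countable_dense Λ
  rw [setOf_exists_neg_eq_biUnion_of_dense hcont hs_dense]
  exact .biUnion hs_count fun θ _ => measurableSet_lt (hmeas θ) measurable_const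

theorem measure_setOf_exists_neg_eq_zero (hcont : ∀ ω, Continuous (Y ω)) {μ : Measure Ω}
    (h : ∀ θ, μ {ω | Y ω θ < 0} = 0) : μ {ω | ∃ θ, Y ω θ < 0} = 0 := by
  obtain ⟨s, hs_count, hs_dense⟩ := exists_countable_dense Λ
  rw [setOf_exists_neg_eq_biUnion_of_dense hcont hs_dense, measure_biUnion_null_iff hs_count]
  exact fun θ _ => h θ

end ParametrizedNegativity

section ProductWithDirac

variable {Ω Λ : Type*} [MeasurableSpace Ω] [MeasurableSpace Λ]

theorem fst_map_prodMk_const (μ : Measure Ω) (θ : Λ) :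
    (μ.map fun ω => (ω, θ)).fst = μ := by
  rw [Measure.fst_map_prodMk measurable_const, Measure.map_id']

theorem measure_le_map_prodMk_const (μ : Measure Ω) (θ : Λ) (s : Set (Ω × Λ)) :
    μ {ω | (ω, θ) ∈ s} ≤ (μ.map fun ω => (ω, θ)) s :=
  Measure.le_map_apply (measurable_id.prodMk measurable_const).aemeasurable s

end ProductWithDirac

theorem stmt6_general {Ω Λ : Type*} [MeasurableSpace Ω] [MetricSpace Λ] [CompactSpace Λ]
    [MeasurableSpace Λ]
    (Y : Ω → Λ → ℝ)
    (hmeas : ∀ θ, Measurable fun ω => Y ω θ)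
    (hcont : ∀ ω, Continuous (Y ω))
    (P : Set (Measure Ω))
    (hP : ∀ μ ∈ P, IsProbabilityMeasure μ) :
    (∀ ν : Measure (Ω × Λ), IsProbabilityMeasure ν → ν.map Prod.fst ∈ P →
        ν {p : Ω × Λ | ¬ 0 ≤ Y p.1 p.2} = 0)
      ↔ (∀ μ ∈ P, μ {ω | ¬ ∀ θ : Λ, 0 ≤ Y ω θ} = 0) := by
  simp only [not_forall, not_le]
  constructor
  · intro h μ hμ
    have := hP μ hμ
    refine measure_setOf_exists_neg_eq_zero hcont fun θ => nonpos_iff_eq_zero.1 ?_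
    calc μ {ω | Y ω θ < 0}
        ≤ (μ.map fun ω => (ω, θ)) {p | Y p.1 p.2 < 0} := measure_le_map_prodMk_const μ θ _
      _ = 0 := h _ (Measure.isProbabilityMeasure_map (by fun_prop))
          (by rwa [← Measure.fst, fst_map_prodMk_const])
  · intro h ν _ hν
    have hsub : {p : Ω × Λ | Y p.1 p.2 < 0} ⊆ Prod.fst ⁻¹' {ω | ∃ θ, Y ω θ < 0} :=
      fun p hp => ⟨p.2, hp⟩
    refine measure_mono_null hsub ?_
    rw [← Measure.map_apply measurable_fst (measurableSet_setOf_exists_neg hmeas hcont)]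
    exact h _ hν

/-- `Y ≥ 0` quasi-surely under the enlarged family iff for quasi-every `ω`,
`Y(ω,θ) ≥ 0` for all `θ`. -/
theorem stmt6 {Ω Λ : Type*} [MeasurableSpace Ω] [MetricSpace Λ] [CompactSpace Λ]
    [MeasurableSpace Λ] [BorelSpace Λ]
    (Y : Ω → Λ → ℝ)
    (hmeas : ∀ θ, Measurable fun ω => Y ω θ)
    (hcont : ∀ ω, Continuous (Y ω))
    (P : Set (Measure Ω))
    (hP : ∀ μ ∈ P, IsProbabilityMeasure μ) :
    (∀ ν : Measure (Ω × Λ), IsProbabilityMeasure ν → ν.map Prod.fst ∈ P →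
        ν {p : Ω × Λ | ¬ 0 ≤ Y p.1 p.2} = 0)
      ↔ (∀ μ ∈ P, μ {ω | ¬ ∀ θ : Λ, 0 ≤ Y ω θ} = 0) :=
  stmt6_general Y hmeas hcont P hP
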